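/- arXiv:1402.2930 — 2 statements merged into one kernel-verified Lean document; each statement's English description precedes it below -/
import Mathlib

section
/- Aluffi's involution is an involution: for every polynomial p ∈ ℚ[t], defining I(p) = (t · p(−t−1) + p(0)) / (t + 1) (which is a polynomial since t+1 divides the numerator), one has I(I(p)) = p. -/
open Polynomial

theorem aluffi_involution_involutive (p q r : Polynomial ℚ)
    (hq : X * p.comp (-X - 1) + C (p.eval 0) = (X + 1) * q)
    (hr : X * q.comp (-X - 1) + C (q.eval 0) = (X + 1) * r) :
    r = p := by
  have h0 : q.eval 0 = p.eval 0 := by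
    have := congrArg (eval 0) hq
    simpa using this.symm
  have hc := congrArg (fun f => f.comp (-X - 1)) hq
  simp only [add_comp, mul_comp, X_comp, C_comp, comp_assoc, neg_comp, sub_comp,
    one_comp] at hc
  have hXX : (-(-X - 1) - 1 : Polynomial ℚ) = X := by ring
  rw [hXX, comp_X] at hc
  -- hc : (-X - 1) * p + C (p.eval 0) = (-X - 1 + 1) * q.comp (-X - 1)
  have key : X * q.comp (-X - 1) = (X + 1) * p - C (p.eval 0) := by
    have : (-X - 1 + 1 : Polynomial ℚ) = -X := by ring
    rw [this] at hc
    linear_combination hc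
  have hfin : (X + 1 : Polynomial ℚ) * r = (X + 1) * p := by
    rw [← hr, key, h0]; ring
  exact mul_left_cancel₀ (by
    intro h
    have := congrArg (eval 0) h
    simp at this) hfin
end

section
/- Let d be an integer and n a natural number. In ℤ[h]/(h^{n+1}), with u denoting the inverse of the unit 1 + d·h, one has (1+h)^{n+1} − ∑_{j=0}^{n} (d−1)^j (−h)^j (1+h)^{n−j} = (1+h)^{n+1} · d·h · u. -/
open Polynomial

lemma csm_aux (d : ℤ) (n : ℕ) (I : Ideal (Polynomial ℤ))
    (hI : I = Ideal.span {(X : Polynomial ℤ) ^ (n + 1)})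
    (u : Polynomial ℤ ⧸ I)
    (hu : (Ideal.Quotient.mk I (1 + C d * X)) * u = 1) :
    Ideal.Quotient.mk I ((1 + X) ^ (n + 1)) -
        ∑ j ∈ Finset.range (n + 1),
          Ideal.Quotient.mk I (C ((d - 1) ^ j) * (-X) ^ j * (1 + X) ^ (n - j)) =
      Ideal.Quotient.mk I ((1 + X) ^ (n + 1)) * Ideal.Quotient.mk I (C d * X) * u := by
  set f : Polynomial ℤ →+* Polynomial ℤ ⧸ I := Ideal.Quotient.mk I with hf
  have hcan : ∀ a b : Polynomial ℤ ⧸ I, a * f (1 + C d * X) = b * f (1 + C d * X) → a = b := by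
    intro a b h
    have h2 : a * (f (1 + C d * X) * u) = b * (f (1 + C d * X) * u) := by
      rw [← mul_assoc, h, mul_assoc]
    rwa [hu, mul_one, mul_one] at h2
  apply hcan
  have hrhs : f ((1 + X) ^ (n + 1)) * f (C d * X) * u * f (1 + C d * X)
      = f ((1 + X) ^ (n + 1) * (C d * X)) := by
    rw [mul_assoc, mul_comm u, hu, mul_one, ← map_mul]
  rw [hrhs, sub_mul, Finset.sum_mul]
  simp only [← map_mul]
  rw [← map_sum, ← map_sub]
  rw [hf, Ideal.Quotient.eq]
  have hterm : ∀ j ∈ Finset.range (n + 1),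
      C ((d - 1) ^ j) * (-X : Polynomial ℤ) ^ j * (1 + X) ^ (n - j) * (1 + C d * X)
        = (C (1 - d) * X) ^ j * (1 + X) ^ ((n + 1) - 1 - j) * (1 + C d * X) := by
    intro j _
    have h3 : C ((d - 1) ^ j) * (-X : Polynomial ℤ) ^ j = (C (1 - d) * X) ^ j := by
      rw [C_pow, ← mul_pow, show (1 - d) = -(d - 1) by ring, C_neg]
      ring
    rw [h3, Nat.add_sub_cancel]
  rw [Finset.sum_congr rfl hterm, ← Finset.sum_mul]
  have hgeom := geom_sum₂_mul (C (1 - d) * X : Polynomial ℤ) (1 + X) (n + 1)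
  have key : (1 + X : Polynomial ℤ) ^ (n + 1) * (1 + C d * X) -
        (∑ j ∈ Finset.range (n + 1), (C (1 - d) * X) ^ j * (1 + X) ^ ((n + 1) - 1 - j)) *
        (1 + C d * X) - (1 + X) ^ (n + 1) * (C d * X) = (C (1 - d) * X) ^ (n + 1) := by
    have h1 : (1 + C d * X : Polynomial ℤ) = -((C (1 - d) * X) - (1 + X)) := by
      simp [C_sub]; ring
    rw [h1]
    simp only [mul_neg]
    rw [hgeom]
    simp only [C_sub, C_1]
    ring
  rw [key, hI]
  exact Ideal.mem_span_singleton.mpr ⟨(C (1 - d)) ^ (n + 1), by rw [mul_pow]; ring⟩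

theorem csm_smooth_hypersurface (d : ℤ) (n : ℕ)
    (u : Polynomial ℤ ⧸ Ideal.span {(X : Polynomial ℤ) ^ (n + 1)})
    (hu : (Ideal.Quotient.mk (Ideal.span {(X : Polynomial ℤ) ^ (n + 1)}) (1 + C d * X)) * u = 1) :
    Ideal.Quotient.mk (Ideal.span {(X : Polynomial ℤ) ^ (n + 1)}) ((1 + X) ^ (n + 1)) -
        ∑ j ∈ Finset.range (n + 1),
          Ideal.Quotient.mk (Ideal.span {(X : Polynomial ℤ) ^ (n + 1)})
            (C ((d - 1) ^ j) * (-X) ^ j * (1 + X) ^ (n - j)) =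
      Ideal.Quotient.mk (Ideal.span {(X : Polynomial ℤ) ^ (n + 1)}) ((1 + X) ^ (n + 1)) *
        Ideal.Quotient.mk (Ideal.span {(X : Polynomial ℤ) ^ (n + 1)}) (C d * X) * u :=
  csm_aux d n _ rfl u hu
end
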